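/- Let a₀, a₁, a₂, a₃, η₁, ..., η_K and b₀, b₁, b₂, b₃, ζ₁, ..., ζ_K be real numbers, and define cubic spline functions f(x) = a₀ + a₁x + a₂x² + a₃x³ + Σ_{k=1}^K η_k((x−γ_k)₊)³ and g(x) = b₀ + b₁x + b₂x² + b₃x³ + Σ_{k=1}^K ζ_k((x−γ_k)₊)³. Define the affine maps F, G : ℝ^{K+3} → ℝ by F(w) = a₀ + a₁w₁ + a₂w₂ + a₃w₃ + Σ_{k=1}^K η_k w_{3+k} and G(w) = b₀ + b₁w₁ + b₂w₂ + b₃w₃ + Σ_{k=1}^K ζ_k w_{3+k}, so that f(x) = F(c(x)) and g(x) = G(c(x)) for x ∈ [0,1]. If F(vᵢ) ≤ G(vᵢ) for every i = 1, ..., K+4, then f(x) ≤ g(x) for every x ∈ [0,1]; in particular, quantile spline curves whose values are ordered at the K+4 vertices do not cross on [0,1]. -/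

import Mathlib

/-!
The point `c(x)` is a convex combination of the vertices, so the affine function `G - F`, being
nonnegative at the vertices, is nonnegative at `c(x)`.

The vertices `v₃, …, v_{K+4}` are the points `u(τ₀), …, u(τ_{K+1})` of the family
`u(t) = ((2+t)/3, (1+2t)/3, t, ((t-γ₁)₊(1-γ₁)², …, (t-γ_K)₊(1-γ_K)²))`, at the nodes
`τ₀ = 0 < γ₁ < ⋯ < γ_K < τ_{K+1} = 1`. Let `φ(t) = (x-t)₊³ / (1-t)²`, let `σ_{j+1}` be the slope
of `φ` on `[τ_j, τ_{j+1}]`, `σ₀ = φ'(0) = 2x³ - 3x²` and `σ_{K+2} = 0`. The weights are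
`(1-x)²` on `v₁`, `2x(1-x)²` on `v₂` and the slope jumps `σ_{j+1} - σ_j` on `u(τ_j)`; summation by
parts shows that they reproduce `c(x)`. They are nonnegative because `φ` is convex on `(-∞, 1]`:
it is the upper envelope of the lines `t ↦ 3l²(x-t) - 2l³(1-t)`, `l ≥ 0`.
-/

/-- The curve `c(x) = (x, x², x³, ((x−γ₁)₊)³, …, ((x−γ_K)₊)³)` in `ℝ^{K+3}`. -/
noncomputable def pyrCurve (K : ℕ) (γ : Fin K → ℝ) (x : ℝ) : Fin (K + 3) → ℝ :=
  fun i =>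
    if h0 : i.val = 0 then x
    else if h1 : i.val = 1 then x ^ 2
    else if h2 : i.val = 2 then x ^ 3
    else (max (x - γ ⟨i.val - 3, by have := i.isLt; omega⟩) 0) ^ 3

/-- The `K+4` vertices `v₁, …, v_{K+4}` of the enclosing polytope in `ℝ^{K+3}`
(here `0`-indexed: `pyrVert K γ p` is `v_{p+1}`). -/
noncomputable def pyrVert (K : ℕ) (γ : Fin K → ℝ) (p : Fin (K + 4)) : Fin (K + 3) → ℝ :=
  fun i =>
    if hp0 : p.val = 0 then 0
    else if hp1 : p.val = 1 then
      if i.val = 0 then 1 / 2 else 0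
    else if hp2 : p.val = 2 then
      if i.val = 0 then 2 / 3 else if i.val = 1 then 1 / 3 else 0
    else if hpl : p.val = K + 3 then
      if hi : i.val ≤ 2 then 1
      else (1 - γ ⟨i.val - 3, by have := i.isLt; omega⟩) ^ 3
    else
      let k : Fin K := ⟨p.val - 3, by have := p.isLt; omega⟩
      if hi0 : i.val = 0 then (2 + γ k) / 3
      else if hi1 : i.val = 1 then (1 + 2 * γ k) / 3
      else if hi2 : i.val = 2 then γ k
      else
        let j : Fin K := ⟨i.val - 3, by have := i.isLt; omega⟩
        if j.val < k.val then (γ k - γ j) * (1 - γ j) ^ 2 else 0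

open Finset

theorem sum_range_slope_sub_mul_ite {τ y σ : ℕ → ℝ} {m n : ℕ}
    (hσ : ∀ j < n, σ (j + 1) * (τ (j + 1) - τ j) = y (j + 1) - y j) (hmn : m ≤ n) :
    ∑ j ∈ range (n + 1), (σ (j + 1) - σ j) * (if m < j then τ j - τ m else 0)
      = σ (n + 1) * (τ n - τ m) - (y n - y m) := by
  induction n, hmn using Nat.le_induction with
  | base =>
    rw [sum_eq_zero fun j hj => by rw [if_neg (by simp at hj; omega), mul_zero]]
    ring
  | succ n hmn ih =>
    rw [sum_range_succ, ih fun j hj => hσ j (by omega), if_pos (by omega)]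
    linear_combination -hσ n (by omega)

noncomputable def pyrProfile (x t : ℝ) : ℝ := (max (x - t) 0) ^ 3 / (1 - t) ^ 2

lemma pyrProfile_nonneg (x t : ℝ) : 0 ≤ pyrProfile x t := by
  unfold pyrProfile; positivity

lemma pyrProfile_zero {x : ℝ} (hx : 0 ≤ x) : pyrProfile x 0 = x ^ 3 := by
  simp [pyrProfile, hx]

lemma pyrProfile_one (x : ℝ) : pyrProfile x 1 = 0 := by
  simp [pyrProfile]

lemma tangent_le_pyrProfile {x t l : ℝ} (hx : x ≤ 1) (ht : t ≤ 1) (hl : 0 ≤ l) :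
    3 * l ^ 2 * (x - t) - 2 * l ^ 3 * (1 - t) ≤ pyrProfile x t := by
  rcases ht.lt_or_eq with ht | rfl
  · rcases le_or_gt x t with hxt | hxt
    · have : 0 ≤ 2 * l ^ 3 * (1 - t) := by have := sub_pos.2 ht; positivity
      have : 3 * l ^ 2 * (x - t) ≤ 0 := mul_nonpos_of_nonneg_of_nonpos (by positivity) (by linarith)
      linarith [pyrProfile_nonneg x t]
    · rw [pyrProfile, max_eq_left (sub_pos.2 hxt).le, le_div_iff₀ (by nlinarith)]
      have h : 0 ≤ (x - t - l * (1 - t)) ^ 2 * (x - t + 2 * l * (1 - t)) := by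
        have := sub_pos.2 ht; have := sub_pos.2 hxt; positivity
      linear_combination h
  · rw [pyrProfile_one]
    nlinarith [sq_nonneg l]

lemma pyrProfile_eq_tangent {x t : ℝ} (ht : t < 1) :
    pyrProfile x t = 3 * (max (x - t) 0 / (1 - t)) ^ 2 * (x - t)
      - 2 * (max (x - t) 0 / (1 - t)) ^ 3 * (1 - t) := by
  have hd : max (x - t) 0 * (x - t) = max (x - t) 0 * max (x - t) 0 := by
    rcases le_total (x - t) 0 with h | h
    · rw [max_eq_right h]; ring
    · rw [max_eq_left h]
  have hu : 1 - t ≠ 0 := by linarith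
  rw [pyrProfile]
  field_simp
  linear_combination -3 * max (x - t) 0 * hd

lemma convexOn_pyrProfile {x : ℝ} (hx : x ≤ 1) : ConvexOn ℝ (Set.Iic 1) (pyrProfile x) := by
  refine ⟨convex_Iic 1, fun a ha b hb p q hp hq hpq => ?_⟩
  simp only [smul_eq_mul]
  rw [Set.mem_Iic] at ha hb
  have ht : p * a + q * b ≤ 1 := by nlinarith
  rcases ht.lt_or_eq with ht | ht
  · set l := max (x - (p * a + q * b)) 0 / (1 - (p * a + q * b))
    have hl : 0 ≤ l := div_nonneg (le_max_right _ _) (by linarith)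
    calc pyrProfile x (p * a + q * b)
        = p * (3 * l ^ 2 * (x - a) - 2 * l ^ 3 * (1 - a))
          + q * (3 * l ^ 2 * (x - b) - 2 * l ^ 3 * (1 - b)) := by
          rw [pyrProfile_eq_tangent ht]; linear_combination (2 * l ^ 3 - 3 * l ^ 2 * x) * hpq
      _ ≤ p * pyrProfile x a + q * pyrProfile x b := by
          gcongr <;> exact tangent_le_pyrProfile hx ‹_› hl
  · rw [ht, pyrProfile_one]
    have := pyrProfile_nonneg x a; have := pyrProfile_nonneg x b; positivity

noncomputable def pyrNode (K : ℕ) (γ : Fin K → ℝ) : ℕ → ℝ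
  | 0 => 0
  | j + 1 => if h : j < K then γ ⟨j, h⟩ else 1

section Nodes

variable {K : ℕ} {γ : Fin K → ℝ}

@[simp] lemma pyrNode_zero : pyrNode K γ 0 = 0 := rfl

lemma pyrNode_succ_self : pyrNode K γ (K + 1) = 1 := by
  simp [pyrNode]

lemma pyrNode_le_one (hγ1 : ∀ k, γ k < 1) : ∀ j, pyrNode K γ j ≤ 1
  | 0 => zero_le_one
  | j + 1 => by
    simp only [pyrNode]
    split_ifs
    exacts [(hγ1 _).le, le_rfl]

lemma pyrNode_lt_succ (hγ0 : ∀ k, 0 < γ k) (hγ1 : ∀ k, γ k < 1) (hγ : StrictMono γ) :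
    ∀ {j}, j ≤ K → pyrNode K γ j < pyrNode K γ (j + 1)
  | 0, _ => by
    simp only [pyrNode]
    split_ifs
    exacts [hγ0 _, zero_lt_one]
  | j + 1, hj => by
    simp only [pyrNode]
    rw [dif_pos (by omega)]
    split_ifs
    exacts [hγ (Fin.mk_lt_mk.2 (Nat.lt_succ_self j)), hγ1 _]

end Nodes

noncomputable def pyrSlope (K : ℕ) (γ : Fin K → ℝ) (x : ℝ) : ℕ → ℝ
  | 0 => 2 * x ^ 3 - 3 * x ^ 2
  | j + 1 =>
    if j ≤ K then
      (pyrProfile x (pyrNode K γ (j + 1)) - pyrProfile x (pyrNode K γ j)) /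
        (pyrNode K γ (j + 1) - pyrNode K γ j)
    else 0

noncomputable def pyrWeight (K : ℕ) (γ : Fin K → ℝ) (x : ℝ) : ℕ → ℝ
  | 0 => (1 - x) ^ 2
  | 1 => 2 * x * (1 - x) ^ 2
  | j + 2 => pyrSlope K γ x (j + 1) - pyrSlope K γ x j

section Weights

variable {K : ℕ} {γ : Fin K → ℝ} {x : ℝ}
  (hγ0 : ∀ k, 0 < γ k) (hγ1 : ∀ k, γ k < 1) (hγ : StrictMono γ)
include hγ0 hγ1 hγ

lemma pyrSlope_le_succ (hx : x ∈ Set.Icc 0 1) :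
    ∀ {j}, j ≤ K + 1 → pyrSlope K γ x j ≤ pyrSlope K γ x (j + 1)
  | 0, _ => by
    have hτ := pyrNode_lt_succ hγ0 hγ1 hγ (Nat.zero_le K)
    have h := tangent_le_pyrProfile hx.2 (pyrNode_le_one hγ1 1) hx.1
    rw [pyrNode_zero] at hτ
    simp only [pyrSlope, Nat.zero_le, if_true, pyrNode_zero, sub_zero, zero_add]
    rw [le_div_iff₀ hτ, pyrProfile_zero hx.1]
    linear_combination h
  | j + 1, hj => by
    rcases Nat.lt_or_ge j K with hjK | hjK
    · simp only [pyrSlope, if_pos hjK.le, if_pos (Nat.succ_le_of_lt hjK)]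
      exact (convexOn_pyrProfile hx.2).slope_mono_adjacent (pyrNode_le_one hγ1 _)
        (pyrNode_le_one hγ1 _) (pyrNode_lt_succ hγ0 hγ1 hγ (by omega))
        (pyrNode_lt_succ hγ0 hγ1 hγ (by omega))
    · obtain rfl : K = j := by omega
      have hτ := pyrNode_lt_succ hγ0 hγ1 hγ (le_refl K)
      simp only [pyrSlope, le_refl, if_true, show ¬ K + 1 ≤ K by omega, if_false]
      refine div_nonpos_of_nonpos_of_nonneg ?_ (sub_nonneg.2 hτ.le)
      rw [pyrNode_succ_self, pyrProfile_one, zero_sub, neg_nonpos]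
      exact pyrProfile_nonneg _ _

end Weights

section Vertices

variable {K : ℕ} {γ : Fin K → ℝ}

lemma pyrVert_zero : pyrVert K γ 0 = 0 := by
  ext i; simp [pyrVert]

lemma pyrVert_one (i : Fin (K + 3)) : pyrVert K γ 1 i = if i.val = 0 then 1 / 2 else 0 := by
  simp [pyrVert]

lemma pyrVert_succ_succ_zero (j : Fin (K + 2)) :
    pyrVert K γ j.succ.succ ⟨0, by simp⟩ = (2 + pyrNode K γ j) / 3 := by
  obtain ⟨_ | j, hj⟩ := j
  · simp [pyrVert, Nat.mod_eq_of_lt (by omega : 2 < K + 4)]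
  rcases Nat.lt_or_ge j K with hjK | hjK
  · simp [pyrVert, pyrNode, hjK, hjK.ne]
  · obtain rfl : j = K := by omega
    simp [pyrVert, pyrNode]
    norm_num

lemma pyrVert_succ_succ_one (j : Fin (K + 2)) :
    pyrVert K γ j.succ.succ ⟨1, by simp⟩ = (1 + 2 * pyrNode K γ j) / 3 := by
  obtain ⟨_ | j, hj⟩ := j
  · simp [pyrVert, Nat.mod_eq_of_lt (by omega : 2 < K + 4)]
  rcases Nat.lt_or_ge j K with hjK | hjK
  · simp [pyrVert, pyrNode, hjK, hjK.ne]
  · obtain rfl : j = K := by omega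
    simp [pyrVert, pyrNode]
    norm_num

lemma pyrVert_succ_succ_two (j : Fin (K + 2)) :
    pyrVert K γ j.succ.succ ⟨2, by simp⟩ = pyrNode K γ j := by
  obtain ⟨_ | j, hj⟩ := j
  · simp [pyrVert]
  rcases Nat.lt_or_ge j K with hjK | hjK
  · simp [pyrVert, pyrNode, hjK, hjK.ne]
  · obtain rfl : j = K := by omega
    simp [pyrVert, pyrNode]

lemma pyrVert_succ_succ_add_three (j : Fin (K + 2)) {k : ℕ} (hk : k + 3 < K + 3) :
    pyrVert K γ j.succ.succ ⟨k + 3, hk⟩ =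
      (if k + 1 < j then pyrNode K γ j - pyrNode K γ (k + 1) else 0)
        * (1 - pyrNode K γ (k + 1)) ^ 2 := by
  have hkK : k < K := by omega
  obtain ⟨_ | j, hj⟩ := j
  · simp [pyrVert]
  rcases Nat.lt_or_ge j K with hjK | hjK
  · simp [pyrVert, pyrNode, hjK, hjK.ne, hkK]
  · obtain rfl : j = K := by omega
    simp [pyrVert, pyrNode, hkK]
    ring

end Vertices

section Representation

variable {K : ℕ} {γ : Fin K → ℝ} {x : ℝ}

lemma sum_range_pyrWeight :
    ∑ j ∈ range (K + 2), pyrWeight K γ x (j + 2) = 3 * x ^ 2 - 2 * x ^ 3 := by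
  simp only [pyrWeight]
  rw [sum_range_sub (pyrSlope K γ x)]
  simp [pyrSlope]

lemma sum_pyrWeight : ∑ p : Fin (K + 4), pyrWeight K γ x p = 1 := by
  rw [Fin.sum_univ_eq_sum_range (pyrWeight K γ x), sum_range_succ', sum_range_succ',
    sum_range_pyrWeight]
  simp only [pyrWeight]
  ring

variable (hγ0 : ∀ k, 0 < γ k) (hγ1 : ∀ k, γ k < 1) (hγ : StrictMono γ)
include hγ0 hγ1 hγ

lemma pyrWeight_nonneg (hx : x ∈ Set.Icc 0 1) : ∀ {p}, p ≤ K + 3 → 0 ≤ pyrWeight K γ x p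
  | 0, _ => sq_nonneg _
  | 1, _ => by have := hx.1; simp only [pyrWeight]; positivity
  | j + 2, hj => sub_nonneg.2 (pyrSlope_le_succ hγ0 hγ1 hγ hx (by omega))

lemma sum_range_pyrWeight_mul_ite {m : ℕ} (hm : m ≤ K + 1) :
    ∑ j ∈ range (K + 2), pyrWeight K γ x (j + 2) *
        (if m < j then pyrNode K γ j - pyrNode K γ m else 0) = pyrProfile x (pyrNode K γ m) := by
  have hslope : ∀ j < K + 1, pyrSlope K γ x (j + 1) * (pyrNode K γ (j + 1) - pyrNode K γ j)
      = pyrProfile x (pyrNode K γ (j + 1)) - pyrProfile x (pyrNode K γ j) := fun j hj => by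
    rw [pyrSlope, if_pos (by omega)]
    exact div_mul_cancel₀ _ (sub_pos.2 (pyrNode_lt_succ hγ0 hγ1 hγ (by omega))).ne'
  simp only [pyrWeight]
  rw [sum_range_slope_sub_mul_ite (y := fun j => pyrProfile x (pyrNode K γ j)) hslope hm,
    pyrNode_succ_self, pyrProfile_one]
  simp [pyrSlope]

lemma sum_range_pyrWeight_mul_pyrNode (hx : 0 ≤ x) :
    ∑ j ∈ range (K + 2), pyrWeight K γ x (j + 2) * pyrNode K γ j = x ^ 3 := by
  rw [← pyrProfile_zero hx, ← pyrNode_zero (K := K) (γ := γ),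
    ← sum_range_pyrWeight_mul_ite hγ0 hγ1 hγ (Nat.zero_le _)]
  refine sum_congr rfl fun j _ => ?_
  rcases j with _ | j <;> simp

lemma sum_pyrWeight_smul_pyrVert (hx : 0 ≤ x) :
    ∑ p : Fin (K + 4), pyrWeight K γ x p • pyrVert K γ p = pyrCurve K γ x := by
  have hlin (a b : ℝ) : ∑ j : Fin (K + 2), pyrWeight K γ x (j + 2) * (a + b * pyrNode K γ j)
      = a * (3 * x ^ 2 - 2 * x ^ 3) + b * x ^ 3 := by
    rw [Fin.sum_univ_eq_sum_range (fun j => pyrWeight K γ x (j + 2) * (a + b * pyrNode K γ j)),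
      ← sum_range_pyrWeight, ← sum_range_pyrWeight_mul_pyrNode hγ0 hγ1 hγ hx, mul_sum, mul_sum,
      ← sum_add_distrib]
    exact sum_congr rfl fun _ _ => by ring
  have hw1 : pyrWeight K γ x 1 = 2 * x * (1 - x) ^ 2 := rfl
  ext ⟨i, hi⟩
  simp only [Finset.sum_apply, Pi.smul_apply, smul_eq_mul]
  rw [Fin.sum_univ_succ, Fin.sum_univ_succ, pyrVert_zero, Fin.succ_zero_eq_one, pyrVert_one]
  simp only [Fin.val_succ, Fin.val_one, add_assoc, Nat.reduceAdd, Pi.zero_apply, mul_zero,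
    zero_add, hw1]
  rcases (by omega : i = 0 ∨ i = 1 ∨ i = 2 ∨ 3 ≤ i) with rfl | rfl | rfl | hi3
  · simp only [pyrVert_succ_succ_zero, if_true]
    rw [sum_congr rfl fun j _ => by
      rw [show (2 + pyrNode K γ j) / 3 = 2 / 3 + 1 / 3 * pyrNode K γ j by ring], hlin]
    simp [pyrCurve]
    ring
  · simp only [pyrVert_succ_succ_one, one_ne_zero, if_false]
    rw [sum_congr rfl fun j _ => by
      rw [show (1 + 2 * pyrNode K γ j) / 3 = 1 / 3 + 2 / 3 * pyrNode K γ j by ring], hlin]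
    simp [pyrCurve]
    ring
  · simp only [pyrVert_succ_succ_two, OfNat.ofNat_ne_zero, if_false]
    simpa [pyrCurve] using hlin 0 1
  · obtain ⟨k, rfl⟩ := Nat.exists_eq_add_of_le' hi3
    have hk : k < K := by omega
    have hτ : pyrNode K γ (k + 1) = γ ⟨k, hk⟩ := by simp [pyrNode, hk]
    simp only [pyrVert_succ_succ_add_three, ← mul_assoc, show k + 3 ≠ 0 by omega, if_false]
    rw [← sum_mul, Fin.sum_univ_eq_sum_range (fun j => pyrWeight K γ x (j + 2) *
        (if k + 1 < j then pyrNode K γ j - pyrNode K γ (k + 1) else 0)),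
      sum_range_pyrWeight_mul_ite hγ0 hγ1 hγ (by omega), pyrProfile, hτ,
      div_mul_cancel₀ _ (pow_ne_zero 2 (sub_pos.2 (hγ1 _)).ne')]
    simp [pyrCurve]

lemma pyrCurve_mem_convexHull (hx : x ∈ Set.Icc 0 1) :
    pyrCurve K γ x ∈ convexHull ℝ (Set.range (pyrVert K γ)) :=
  mem_convexHull_of_exists_fintype (fun p : Fin (K + 4) => pyrWeight K γ x p) (pyrVert K γ)
    (fun p => pyrWeight_nonneg hγ0 hγ1 hγ hx (Nat.le_of_lt_succ p.isLt)) sum_pyrWeight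
    Set.mem_range_self (sum_pyrWeight_smul_pyrVert hγ0 hγ1 hγ hx.1)

end Representation

lemma exists_affineMap_coe_eq {K : ℕ} {F : (Fin (K + 3) → ℝ) → ℝ} {c0 c1 c2 c3 : ℝ}
    {η : Fin K → ℝ}
    (hF : ∀ w, F w = c0 + c1 * w ⟨0, by simp⟩ + c2 * w ⟨1, by simp⟩ + c3 * w ⟨2, by simp⟩ +
      ∑ k : Fin K, η k * w ⟨k.val + 3, Nat.add_lt_add_right k.isLt 3⟩) :
    ∃ A : (Fin (K + 3) → ℝ) →ᵃ[ℝ] ℝ, ⇑A = F := by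
  let L : (Fin (K + 3) → ℝ) →ₗ[ℝ] ℝ :=
    c1 • LinearMap.proj ⟨0, by simp⟩ + c2 • LinearMap.proj ⟨1, by simp⟩ +
      c3 • LinearMap.proj ⟨2, by simp⟩ +
      ∑ k : Fin K, η k • LinearMap.proj ⟨k.val + 3, Nat.add_lt_add_right k.isLt 3⟩
  refine ⟨L.toAffineMap + AffineMap.const ℝ _ c0, funext fun w => ?_⟩
  simp [L, hF]
  ring

/-- If the affine evaluations of two cubic spline curves are ordered at all `K+4`
vertices `v₁, …, v_{K+4}`, then the spline curves are ordered (do not cross)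
everywhere on `[0,1]`. -/
theorem splines_noncrossing_of_le_at_verts (K : ℕ) (γ : Fin K → ℝ)
    (hγ0 : ∀ k, 0 < γ k) (hγ1 : ∀ k, γ k < 1) (hγmono : StrictMono γ)
    (a0 a1 a2 a3 : ℝ) (η : Fin K → ℝ) (b0 b1 b2 b3 : ℝ) (ζ : Fin K → ℝ)
    (f g : ℝ → ℝ)
    (hf : ∀ x, f x = a0 + a1 * x + a2 * x ^ 2 + a3 * x ^ 3 +
      ∑ k : Fin K, η k * (max (x - γ k) 0) ^ 3)
    (hg : ∀ x, g x = b0 + b1 * x + b2 * x ^ 2 + b3 * x ^ 3 +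
      ∑ k : Fin K, ζ k * (max (x - γ k) 0) ^ 3)
    (F G : (Fin (K + 3) → ℝ) → ℝ)
    (hF : ∀ w, F w = a0 + a1 * w ⟨0, by omega⟩ + a2 * w ⟨1, by omega⟩ +
      a3 * w ⟨2, by omega⟩ +
      ∑ k : Fin K, η k * w ⟨k.val + 3, by have := k.isLt; omega⟩)
    (hG : ∀ w, G w = b0 + b1 * w ⟨0, by omega⟩ + b2 * w ⟨1, by omega⟩ +
      b3 * w ⟨2, by omega⟩ +
      ∑ k : Fin K, ζ k * w ⟨k.val + 3, by have := k.isLt; omega⟩)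
    (hle : ∀ p : Fin (K + 4), F (pyrVert K γ p) ≤ G (pyrVert K γ p)) :
    ∀ x ∈ Set.Icc (0 : ℝ) 1, f x ≤ g x := by
  intro x hx
  obtain ⟨A, rfl⟩ := exists_affineMap_coe_eq hF
  obtain ⟨B, rfl⟩ := exists_affineMap_coe_eq hG
  have hconv : Convex ℝ {w | A w ≤ B w} := by
    simpa [Set.preimage, sub_nonneg] using (convex_Ici (0 : ℝ)).affine_preimage (B - A)
  have hcurve : A (pyrCurve K γ x) ≤ B (pyrCurve K γ x) :=
    convexHull_min (Set.range_subset_iff.2 hle) hconv (pyrCurve_mem_convexHull hγ0 hγ1 hγmono hx)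
  rw [hF, hG] at hcurve
  rwa [hf, hg]
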